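/- Let F ∈ C³(ℝ) with F'(0) = F''(0) = 0. Then for all λ > 0, all x ∈ ℝ³ with x ≠ 0, and all y ∈ ℝ³: F(λ|x−y|) = F(λ|x|) − λ ⟨y, w(x)⟩ F'(λ|x|) + (λ²/2) [ (|y|² − ⟨y, w(x)⟩²) F'(λ|x|)/(λ|x|) + ⟨y, w(x)⟩² F''(λ|x|) ] + (λ³ |y|³ / 2) ∫₀¹ (1−θ)² [ 3 cos α sin²α ( F'(λ|x−θy|)/(λ²|x−θy|²) − F''(λ|x−θy|)/(λ|x−θy|) ) − cos³α · F'''(λ|x−θy|) ] dθ, where for each θ, cos α = cos α(x,y,θ) is determined by |y| cos α = ⟨y, w(x−θy)⟩, sin²α := 1 − cos²α, and the quotients F'(p)/p², F''(p)/p are understood by their continuous extensions (with values F'''(0)/2 and F'''(0) respectively) at p = 0. -/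

import Mathlib

noncomputable section

open MeasureTheory Real Classical
open scoped RealInnerProductSpace

/-- `w(x) = x/|x|` for `x ≠ 0`, and `w(0) = 0`. -/
noncomputable def wdir (x : EuclideanSpace ℝ (Fin 3)) : EuclideanSpace ℝ (Fin 3) :=
  if x = 0 then 0 else ‖x‖⁻¹ • x

/-- The quotient `F'(p)/p²`, extended continuously by `F'''(0)/2` at `p = 0`
(valid when `F'(0) = F''(0) = 0`). -/
noncomputable def dquot2 (F : ℝ → ℝ) (p : ℝ) : ℝ :=
  if p = 0 then iteratedDeriv 3 F 0 / 2 else deriv F p / p ^ 2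

/-- The quotient `F''(p)/p`, extended continuously by `F'''(0)` at `p = 0`
(valid when `F''(0) = 0`). -/
noncomputable def dquot3 (F : ℝ → ℝ) (p : ℝ) : ℝ :=
  if p = 0 then iteratedDeriv 3 F 0 else iteratedDeriv 2 F p / p

/-!
Apply Taylor's formula with integral remainder to `φ(θ) = F(λ|x - θy|)` on `[0, 1]`. Where
`x - θy ≠ 0`, the radius `r = |x - θy|` and `c = ⟨y, w(x - θy)⟩ = |y| cos α` satisfy `r' = -c` and
`c' = (c² - |y|²)/r`, which gives `φ'`, `φ''`, `φ'''` in closed form; `x - θy` vanishes for at most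
one `θ`. There `F'(0) = F''(0) = 0` keeps `φ'` and `φ''` continuous, and the remainder integrand
stays bounded because `F'(p)/p²` and `F''(p)/p` extend continuously to `p = 0`. So the fundamental
theorem of calculus with a countable exceptional set applies to `φ + (1 - θ) φ' + (1 - θ)² φ''/2`,
whose derivative is `(1 - θ)² φ'''/2`.
-/

open Filter Topology

theorem ContDiff.hasDerivAt_iteratedDeriv {F : ℝ → ℝ} {n : WithTop ℕ∞} (hF : ContDiff ℝ n F)
    {k : ℕ} (hk : (k : WithTop ℕ∞) < n) (p : ℝ) :
    HasDerivAt (iteratedDeriv k F) (iteratedDeriv (k + 1) F p) p := by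
  rw [iteratedDeriv_succ]
  exact (hF.differentiable_iteratedDeriv k hk p).hasDerivAt

theorem tendsto_div_self_nhdsNE {g : ℝ → ℝ} {g' : ℝ} (hg : HasDerivAt g g' 0) (hg0 : g 0 = 0) :
    Tendsto (fun p => g p / p) (𝓝[≠] 0) (𝓝 g') := by
  have hslope : slope g 0 = fun p => g p / p := by
    ext p; rw [slope_def_field, hg0, sub_zero, sub_zero]
  exact hslope ▸ hasDerivAt_iff_tendsto_slope.mp hg

theorem continuous_ite_eq_zero {f : ℝ → ℝ} {L : ℝ} (hf : ∀ p ≠ 0, ContinuousAt f p)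
    (hL : Tendsto f (𝓝[≠] 0) (𝓝 L)) : Continuous fun p => if p = 0 then L else f p := by
  refine continuous_iff_continuousAt.2 fun p => ?_
  rcases eq_or_ne p 0 with rfl | hp
  · refine continuousWithinAt_compl_self.1 ?_
    simp only [ContinuousWithinAt, if_pos]
    exact hL.congr' (eventually_nhdsWithin_of_forall fun q hq => (if_neg hq).symm)
  · exact (hf p hp).congr ((isOpen_ne.eventually_mem hp).mono fun q hq => (if_neg hq).symm)

theorem continuousAt_mul_of_abs_le_of_eq_zero {α : Type*} [TopologicalSpace α] {f g : α → ℝ}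
    {a : α} {C : ℝ} (hf : ∀ z, |f z| ≤ C) (hg : ContinuousAt g a) (hga : g a = 0) :
    ContinuousAt (fun z => f z * g z) a := by
  have h : Tendsto (fun z => f z * g z) (𝓝 a) (𝓝 0) :=
    isBoundedUnder_le_mul_tendsto_zero ⟨C, eventually_map.2 (Eventually.of_forall hf)⟩
      (hga ▸ hg.tendsto)
  simpa [ContinuousAt, hga] using h

theorem intervalIntegrable_mul_of_abs_le {f g : ℝ → ℝ} {C : ℝ} (hf : Measurable f)
    (hfC : ∀ t, |f t| ≤ C) (hg : Continuous g) (a b : ℝ) :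
    IntervalIntegrable (fun t => f t * g t) volume a b := by
  have hfi : IntervalIntegrable f volume a b :=
    intervalIntegrable_iff.2 (IntegrableOn.of_bound measure_Ioc_lt_top hf.aestronglyMeasurable C
      (ae_of_all _ hfC))
  exact hfi.mul_continuousOn hg.continuousOn

section VanishingDerivatives

variable {F : ℝ → ℝ} (hF : ContDiff ℝ 3 F)
include hF

theorem continuous_deriv_div_self (hF0 : deriv F 0 = 0) (hF0' : iteratedDeriv 2 F 0 = 0) :
    Continuous fun p => deriv F p / p := by
  have hd : HasDerivAt (deriv F) (iteratedDeriv 2 F 0) 0 := by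
    simpa using hF.hasDerivAt_iteratedDeriv (k := 1) (by norm_num) 0
  convert continuous_ite_eq_zero (f := fun p => deriv F p / p)
    (fun p hp => (hF.continuous_deriv (by norm_num)).continuousAt.div continuousAt_id hp)
    (hF0' ▸ tendsto_div_self_nhdsNE hd hF0) using 2 with p
  split_ifs with hp <;> simp [hp]

theorem continuous_dquot3 (hF0' : iteratedDeriv 2 F 0 = 0) : Continuous (dquot3 F) :=
  continuous_ite_eq_zero
    (fun p hp => (hF.continuous_iteratedDeriv 2 (by norm_num)).continuousAt.div
      continuousAt_id hp)
    (tendsto_div_self_nhdsNE (hF.hasDerivAt_iteratedDeriv (by norm_num) 0) hF0')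

theorem continuous_dquot2 (hF0 : deriv F 0 = 0) (hF0' : iteratedDeriv 2 F 0 = 0) :
    Continuous (dquot2 F) := by
  refine continuous_ite_eq_zero
    (fun p hp => (hF.continuous_deriv (by norm_num)).continuousAt.div
      (continuousAt_id.pow 2) (pow_ne_zero 2 hp)) ?_
  -- L'Hôpital: `F'(p)/p²` behaves like `F''(p)/(2p)`
  have hdiv : Tendsto (fun p => iteratedDeriv 2 F p / (2 * p)) (𝓝[≠] 0)
      (𝓝 (iteratedDeriv 3 F 0 / 2)) := by
    have h3 : Tendsto (dquot3 F) (𝓝[≠] 0) (𝓝 (dquot3 F 0)) :=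
      ((continuous_dquot3 hF hF0').tendsto 0).mono_left nhdsWithin_le_nhds
    rw [dquot3, if_pos rfl] at h3
    refine (h3.div_const 2).congr' ?_
    filter_upwards [self_mem_nhdsWithin] with p (hp : p ≠ 0)
    rw [dquot3, if_neg hp, div_div, mul_comm p]
  refine HasDerivAt.lhopital_zero_nhdsNE (f' := iteratedDeriv 2 F) (g' := fun p => 2 * p)
    (Eventually.of_forall fun p => by
      simpa using hF.hasDerivAt_iteratedDeriv (k := 1) (by norm_num) p)
    (Eventually.of_forall fun p => by simpa using hasDerivAt_pow 2 p)
    (eventually_nhdsWithin_of_forall fun p hp => mul_ne_zero two_ne_zero hp) ?_ ?_ hdiv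
  · simpa [hF0] using
      ((hF.continuous_deriv (by norm_num)).tendsto 0).mono_left nhdsWithin_le_nhds
  · simpa using ((continuous_pow 2).tendsto (0 : ℝ)).mono_left nhdsWithin_le_nhds

end VanishingDerivatives

section Segment

variable {E : Type*} [NormedAddCommGroup E] [InnerProductSpace ℝ E] (x y : E)

def radialComponent (θ : ℝ) : ℝ := ⟪y, x - θ • y⟫ / ‖x - θ • y‖

theorem abs_radialComponent_le (θ : ℝ) : |radialComponent x y θ| ≤ ‖y‖ := by
  rw [radialComponent, abs_div, abs_norm]
  exact div_le_of_le_mul₀ (norm_nonneg _) (norm_nonneg _) (abs_real_inner_le_norm _ _)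

theorem sq_radialComponent_le (θ : ℝ) : radialComponent x y θ ^ 2 ≤ ‖y‖ ^ 2 :=
  sq_le_sq.2 ((abs_radialComponent_le x y θ).trans (le_abs_self _))

theorem setOf_sub_smul_eq_zero_subsingleton (hx : x ≠ 0) :
    {θ : ℝ | x - θ • y = 0}.Subsingleton := by
  intro s (hs : x - s • y = 0) t (ht : x - t • y = 0)
  have hst : (s - t) • y = 0 := by
    rw [show (s - t) • y = (x - t • y) - (x - s • y) by rw [sub_smul]; abel, hs, ht, sub_zero]
  rcases smul_eq_zero.1 hst with h | hy
  · exact sub_eq_zero.1 h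
  · exact absurd (by simpa [hy] using hs) hx

variable {x y} {θ : ℝ}

theorem hasDerivAt_sub_smul : HasDerivAt (fun θ : ℝ => x - θ • y) (-y) θ := by
  simpa using ((hasDerivAt_id θ).smul_const y).const_sub x

theorem hasDerivAt_norm_sub_smul (hθ : x - θ • y ≠ 0) :
    HasDerivAt (fun θ : ℝ => ‖x - θ • y‖) (-radialComponent x y θ) θ := by
  have h := hasDerivAt_sub_smul.norm_sq.sqrt (pow_ne_zero 2 (norm_ne_zero_iff.2 hθ))
  simp only [sqrt_sq (norm_nonneg _)] at h
  refine h.congr_deriv ?_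
  rw [radialComponent, inner_neg_right, real_inner_comm]
  field_simp

theorem hasDerivAt_radialComponent (hθ : x - θ • y ≠ 0) :
    HasDerivAt (radialComponent x y) ((radialComponent x y θ ^ 2 - ‖y‖ ^ 2) / ‖x - θ • y‖) θ := by
  have hnum : HasDerivAt (fun θ : ℝ => ⟪y, x - θ • y⟫) (-‖y‖ ^ 2) θ := by
    simpa [real_inner_self_eq_norm_sq] using
      (hasDerivAt_const θ y).inner ℝ (hasDerivAt_sub_smul (x := x) (y := y))
  refine (hnum.div (hasDerivAt_norm_sub_smul hθ) (norm_ne_zero_iff.2 hθ)).congr_deriv ?_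
  rw [radialComponent]
  field_simp
  ring

variable (F : ℝ → ℝ) (lam : ℝ) (x y : E)

/- With `φ θ = F (lam * ‖x - θ • y‖)`, these are `φ'`, `φ''`, `φ'''` wherever `x - θ • y ≠ 0`,
and `segmentTaylor θ` is the second-order Taylor polynomial of `φ` at `θ`, evaluated at `1`. -/

def segmentDeriv1 (θ : ℝ) : ℝ :=
  -lam * radialComponent x y θ * deriv F (lam * ‖x - θ • y‖)

def segmentDeriv2 (θ : ℝ) : ℝ :=
  lam ^ 2 * ((‖y‖ ^ 2 - radialComponent x y θ ^ 2) *
      (deriv F (lam * ‖x - θ • y‖) / (lam * ‖x - θ • y‖))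
    + radialComponent x y θ ^ 2 * iteratedDeriv 2 F (lam * ‖x - θ • y‖))

def segmentDeriv3 (θ : ℝ) : ℝ :=
  lam ^ 3 * (3 * radialComponent x y θ * (‖y‖ ^ 2 - radialComponent x y θ ^ 2) *
      (deriv F (lam * ‖x - θ • y‖) / (lam * ‖x - θ • y‖) ^ 2
        - iteratedDeriv 2 F (lam * ‖x - θ • y‖) / (lam * ‖x - θ • y‖))
    - radialComponent x y θ ^ 3 * iteratedDeriv 3 F (lam * ‖x - θ • y‖))

def segmentTaylor (θ : ℝ) : ℝ :=
  F (lam * ‖x - θ • y‖) + (1 - θ) * segmentDeriv1 F lam x y θ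
    + (1 - θ) ^ 2 / 2 * segmentDeriv2 F lam x y θ

variable {F lam x y} (hF : ContDiff ℝ 3 F)
include hF

section Regular

variable (hθ : x - θ • y ≠ 0)
include hθ

theorem hasDerivAt_comp_norm_sub_smul :
    HasDerivAt (fun θ : ℝ => F (lam * ‖x - θ • y‖)) (segmentDeriv1 F lam x y θ) θ := by
  have h := (hF.hasDerivAt_iteratedDeriv (k := 0) (by norm_num) _).comp θ
    ((hasDerivAt_norm_sub_smul hθ).const_mul lam)
  simp only [zero_add, iteratedDeriv_zero, iteratedDeriv_one, Function.comp_def] at h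
  exact h.congr_deriv (by rw [segmentDeriv1]; ring)

theorem hasDerivAt_segmentDeriv1 (hlam : lam ≠ 0) :
    HasDerivAt (segmentDeriv1 F lam x y) (segmentDeriv2 F lam x y θ) θ := by
  have hF' := (hF.hasDerivAt_iteratedDeriv (k := 1) (by norm_num) _).comp θ
    ((hasDerivAt_norm_sub_smul hθ).const_mul lam)
  simp only [Nat.reduceAdd, iteratedDeriv_one, Function.comp_def] at hF'
  have hr : ‖x - θ • y‖ ≠ 0 := norm_ne_zero_iff.2 hθ
  refine (((hasDerivAt_radialComponent hθ).const_mul (-lam)).mul hF').congr_deriv ?_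
  rw [segmentDeriv2]
  field_simp
  ring

theorem hasDerivAt_segmentDeriv2 (hlam : lam ≠ 0) :
    HasDerivAt (segmentDeriv2 F lam x y) (segmentDeriv3 F lam x y θ) θ := by
  have hp := (hasDerivAt_norm_sub_smul hθ).const_mul lam
  have hF' := (hF.hasDerivAt_iteratedDeriv (k := 1) (by norm_num) _).comp θ hp
  have hF'' := (hF.hasDerivAt_iteratedDeriv (k := 2) (by norm_num) _).comp θ hp
  simp only [Nat.reduceAdd, iteratedDeriv_one, Function.comp_def] at hF' hF''
  have hr : ‖x - θ • y‖ ≠ 0 := norm_ne_zero_iff.2 hθ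
  have hc := hasDerivAt_radialComponent hθ
  refine ((((hasDerivAt_const θ (‖y‖ ^ 2)).sub (hc.pow 2)).mul
    (hF'.div hp (mul_ne_zero hlam hr))).add ((hc.pow 2).mul hF'')).const_mul (lam ^ 2)
    |>.congr_deriv ?_
  simp only [segmentDeriv3, Pi.div_apply, Pi.sub_apply, Pi.pow_apply]
  field_simp
  ring

theorem hasDerivAt_segmentTaylor (hlam : lam ≠ 0) :
    HasDerivAt (segmentTaylor F lam x y) ((1 - θ) ^ 2 / 2 * segmentDeriv3 F lam x y θ) θ := by
  have hlin : HasDerivAt (fun θ : ℝ => 1 - θ) (-1) θ := by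
    simpa using (hasDerivAt_id θ).const_sub (1 : ℝ)
  refine (((hasDerivAt_comp_norm_sub_smul hF hθ).add
    (hlin.mul (hasDerivAt_segmentDeriv1 hF hθ hlam))).add
    (((hlin.pow 2).div_const 2).mul (hasDerivAt_segmentDeriv2 hF hθ hlam))).congr_deriv ?_
  simp only [Pi.pow_apply]
  ring

end Regular

section Singular

variable (hF0 : deriv F 0 = 0) (hθ : x - θ • y = 0)
include hF0 hθ

theorem continuousAt_segmentDeriv1 : ContinuousAt (segmentDeriv1 F lam x y) θ := by
  have h : segmentDeriv1 F lam x y =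
      fun θ => radialComponent x y θ * (-lam * deriv F (lam * ‖x - θ • y‖)) := by
    ext θ; rw [segmentDeriv1]; ring
  have := hF.continuous_deriv (by norm_num)
  rw [h]
  exact continuousAt_mul_of_abs_le_of_eq_zero (abs_radialComponent_le x y) (by fun_prop)
    (by simp [hθ, hF0])

theorem continuousAt_segmentDeriv2 (hF0' : iteratedDeriv 2 F 0 = 0) :
    ContinuousAt (segmentDeriv2 F lam x y) θ := by
  have h : segmentDeriv2 F lam x y = fun θ =>
      (‖y‖ ^ 2 - radialComponent x y θ ^ 2) *
          (lam ^ 2 * (deriv F (lam * ‖x - θ • y‖) / (lam * ‖x - θ • y‖)))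
        + radialComponent x y θ ^ 2 * (lam ^ 2 * iteratedDeriv 2 F (lam * ‖x - θ • y‖)) := by
    ext θ; rw [segmentDeriv2]; ring
  have hp : Continuous fun θ : ℝ => lam * ‖x - θ • y‖ := by fun_prop
  have hq := (continuous_deriv_div_self hF hF0 hF0').comp hp
  have := hF.continuous_iteratedDeriv 2 (by norm_num)
  rw [h]
  refine ContinuousAt.add ?_ ?_
  · refine continuousAt_mul_of_abs_le_of_eq_zero (C := ‖y‖ ^ 2) (fun θ => ?_)
      (continuousAt_const.mul hq.continuousAt) (by simp [hθ])
    rw [abs_of_nonneg (sub_nonneg.2 (sq_radialComponent_le x y θ))]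
    exact sub_le_self _ (sq_nonneg _)
  · refine continuousAt_mul_of_abs_le_of_eq_zero (C := ‖y‖ ^ 2) (fun θ => ?_)
      (by fun_prop) (by simp [hθ, hF0'])
    rw [abs_of_nonneg (sq_nonneg _)]
    exact sq_radialComponent_le x y θ

end Singular

theorem continuous_segmentTaylor (hF0 : deriv F 0 = 0) (hF0' : iteratedDeriv 2 F 0 = 0)
    (hlam : lam ≠ 0) : Continuous (segmentTaylor F lam x y) := by
  refine continuous_iff_continuousAt.2 fun θ => ?_
  by_cases hθ : x - θ • y = 0
  · have := hF.continuous
    exact ((by fun_prop : ContinuousAt (fun θ : ℝ => F (lam * ‖x - θ • y‖)) θ).add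
      ((continuousAt_const.sub continuousAt_id).mul (continuousAt_segmentDeriv1 hF hF0 hθ))).add
      ((((continuousAt_const.sub continuousAt_id).pow 2).div_const 2).mul
        (continuousAt_segmentDeriv2 hF hF0 hθ hF0'))
  · exact (hasDerivAt_segmentTaylor hF hθ hlam).continuousAt

end Segment

section Euclidean

variable (F : ℝ → ℝ) (lam : ℝ) (x y : EuclideanSpace ℝ (Fin 3))

def cosAngle (θ : ℝ) : ℝ := ⟪y, wdir (x - θ • y)⟫ / ‖y‖

def remainderIntegrand (θ : ℝ) : ℝ :=
  (1 - θ) ^ 2 *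
    (3 * cosAngle x y θ * (1 - cosAngle x y θ ^ 2) *
        (dquot2 F (lam * ‖x - θ • y‖) - dquot3 F (lam * ‖x - θ • y‖))
      - cosAngle x y θ ^ 3 * iteratedDeriv 3 F (lam * ‖x - θ • y‖))

theorem inner_wdir (z : EuclideanSpace ℝ (Fin 3)) : ⟪y, wdir z⟫ = ⟪y, z⟫ / ‖z‖ := by
  rw [wdir]
  split_ifs with hz
  · simp [hz]
  · rw [real_inner_smul_right, inv_mul_eq_div]

theorem cosAngle_eq (θ : ℝ) : cosAngle x y θ = radialComponent x y θ / ‖y‖ := by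
  rw [cosAngle, inner_wdir, radialComponent]

theorem measurable_cosAngle : Measurable (cosAngle x y) := by
  simp only [funext (cosAngle_eq x y), radialComponent]
  fun_prop

theorem abs_cosAngle_le_one (θ : ℝ) : |cosAngle x y θ| ≤ 1 := by
  rw [cosAngle_eq, abs_div, abs_norm]
  exact div_le_one_of_le₀ (abs_radialComponent_le x y θ) (norm_nonneg y)

theorem intervalIntegrable_remainderIntegrand (hF : ContDiff ℝ 3 F)
    (hF0 : deriv F 0 = 0) (hF0' : iteratedDeriv 2 F 0 = 0) (a b : ℝ) :
    IntervalIntegrable (remainderIntegrand F lam x y) volume a b := by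
  have hc := measurable_cosAngle x y
  have hc1 := abs_cosAngle_le_one x y
  have := continuous_dquot2 hF hF0 hF0'
  have := continuous_dquot3 hF hF0'
  have := hF.continuous_iteratedDeriv 3 le_rfl
  have hsplit : remainderIntegrand F lam x y = fun θ =>
      (3 * cosAngle x y θ * (1 - cosAngle x y θ ^ 2)) *
          ((1 - θ) ^ 2 * (dquot2 F (lam * ‖x - θ • y‖) - dquot3 F (lam * ‖x - θ • y‖)))
        - cosAngle x y θ ^ 3 * ((1 - θ) ^ 2 * iteratedDeriv 3 F (lam * ‖x - θ • y‖)) := by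
    ext θ; rw [remainderIntegrand]; ring
  rw [hsplit]
  refine IntervalIntegrable.sub ?_ ?_
  · refine intervalIntegrable_mul_of_abs_le (C := 3) (by fun_prop) (fun θ => ?_) (by fun_prop) a b
    have hsq : |1 - cosAngle x y θ ^ 2| ≤ 1 := by
      have := (sq_le_one_iff_abs_le_one _).2 (hc1 θ)
      rw [abs_le]; constructor <;> nlinarith [sq_nonneg (cosAngle x y θ)]
    rw [abs_mul, abs_mul, abs_of_pos three_pos]
    calc 3 * |cosAngle x y θ| * |1 - cosAngle x y θ ^ 2| ≤ 3 * 1 * 1 := by gcongr; exact hc1 θ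
      _ = 3 := by ring
  · refine intervalIntegrable_mul_of_abs_le (C := 1) (by fun_prop) (fun θ => ?_) (by fun_prop) a b
    rw [abs_pow]
    exact pow_le_one₀ (abs_nonneg _) (hc1 θ)

variable {x y} {θ : ℝ}

theorem mul_remainderIntegrand_eq (hlam : lam ≠ 0) (hθ : x - θ • y ≠ 0) :
    lam ^ 3 * ‖y‖ ^ 3 / 2 * remainderIntegrand F lam x y θ
      = (1 - θ) ^ 2 / 2 * segmentDeriv3 F lam x y θ := by
  rcases eq_or_ne y 0 with rfl | hy
  · simp [segmentDeriv3, radialComponent]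
  have hp : lam * ‖x - θ • y‖ ≠ 0 := mul_ne_zero hlam (norm_ne_zero_iff.2 hθ)
  have hy' : ‖y‖ ≠ 0 := norm_ne_zero_iff.2 hy
  simp only [remainderIntegrand, segmentDeriv3, cosAngle_eq, dquot2, dquot3, if_neg hp]
  field_simp

theorem segmentTaylor_zero :
    segmentTaylor F lam x y 0 = F (lam * ‖x‖) - lam * ⟪y, wdir x⟫ * deriv F (lam * ‖x‖)
      + lam ^ 2 / 2 *
          ((‖y‖ ^ 2 - ⟪y, wdir x⟫ ^ 2) * (deriv F (lam * ‖x‖) / (lam * ‖x‖))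
            + ⟪y, wdir x⟫ ^ 2 * iteratedDeriv 2 F (lam * ‖x‖)) := by
  simp only [segmentTaylor, segmentDeriv1, segmentDeriv2, radialComponent, inner_wdir, zero_smul,
    sub_zero]
  ring

theorem segmentTaylor_one : segmentTaylor F lam x y 1 = F (lam * ‖x - y‖) := by
  simp [segmentTaylor]

end Euclidean

/-- Taylor-type expansion, Lemma 3.5(iii): for `F ∈ C³(ℝ)` with
`F'(0) = F''(0) = 0`, `λ > 0`, `x ≠ 0` and `y ∈ ℝ³`, the third-order expansion of
`F(λ|x-y|)` holds, where for each `θ`, `|y| cos α = ⟨y, w(x-θy)⟩` and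
`sin²α = 1 - cos²α`. -/
theorem stmt10 (F : ℝ → ℝ) (hF : ContDiff ℝ 3 F) (hF0 : deriv F 0 = 0)
    (hF0' : iteratedDeriv 2 F 0 = 0)
    (lam : ℝ) (hlam : 0 < lam) (x y : EuclideanSpace ℝ (Fin 3)) (hx : x ≠ 0) :
    F (lam * ‖x - y‖) = F (lam * ‖x‖) - lam * ⟪y, wdir x⟫ * deriv F (lam * ‖x‖)
      + lam ^ 2 / 2 *
          ((‖y‖ ^ 2 - ⟪y, wdir x⟫ ^ 2) * (deriv F (lam * ‖x‖) / (lam * ‖x‖))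
            + ⟪y, wdir x⟫ ^ 2 * iteratedDeriv 2 F (lam * ‖x‖))
      + lam ^ 3 * ‖y‖ ^ 3 / 2 *
          ∫ θ in (0 : ℝ)..1, (1 - θ) ^ 2 *
            (3 * (⟪y, wdir (x - θ • y)⟫ / ‖y‖) *
                (1 - (⟪y, wdir (x - θ • y)⟫ / ‖y‖) ^ 2) *
                (dquot2 F (lam * ‖x - θ • y‖) - dquot3 F (lam * ‖x - θ • y‖))
              - (⟪y, wdir (x - θ • y)⟫ / ‖y‖) ^ 3 *
                  iteratedDeriv 3 F (lam * ‖x - θ • y‖)) := by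
  have hFTC := integral_eq_of_hasDerivAt_off_countable_of_le (segmentTaylor F lam x y)
    (fun θ => lam ^ 3 * ‖y‖ ^ 3 / 2 * remainderIntegrand F lam x y θ) zero_le_one
    (setOf_sub_smul_eq_zero_subsingleton x y hx).countable
    (continuous_segmentTaylor hF hF0 hF0' hlam.ne').continuousOn
    (fun θ hθ => mul_remainderIntegrand_eq F lam hlam.ne' hθ.2 ▸
      hasDerivAt_segmentTaylor hF hθ.2 hlam.ne')
    ((intervalIntegrable_remainderIntegrand F lam x y hF hF0 hF0' 0 1).const_mul _)
  rw [intervalIntegral.integral_const_mul, segmentTaylor_one, segmentTaylor_zero] at hFTC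
  exact eq_add_of_sub_eq' hFTC.symm
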